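/- arXiv:1212.1389 — 6 statements merged into one kernel-verified Lean document; each statement's English description precedes it below -/
import Mathlib

section
/- Dodgson condensation (Desnanot–Jacobi identity): For an n×n matrix A over a commutative ring with n ≥ 2, and indices i ≠ j, let A(a;b) denote A with row a and column b removed, and A(i,j;i,j) denote A with rows i,j and columns i,j removed. Then det A(i;i) · det A(j;j) − det A(i;j) · det A(j;i) = det A · det A(i,j;i,j). -/
/-!
Jacobi's theorem on complementary minors of the adjugate, for a `2 × 2` minor. Split the index
type as `m ⊕ k` and let `N` be the identity with its `k`-columns replaced by those of `adj A`.
Then `A * N` is block lower triangular with diagonal blocks `A₁₁` and `det A • 1`, and `N` is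
block upper triangular with diagonal blocks `1` and `(adj A)₂₂`, so
`det A * det (adj A)₂₂ = det A ^ |k| * det A₁₁`. For the generic matrix over `ℤ[X_pq]` the
factor `det A` is nonzero and can be cancelled; specialising gives the identity for every `A`.
With `k = {i, j}`, the cofactor formula `adj A p q = (-1)^(p+q) det A(q;p)` turns the `2 × 2`
minor of `adj A` into the left-hand side, the signs of the off-diagonal terms cancelling.
-/

namespace Matrix

variable {R : Type*} [CommRing R] {m k : Type*} [Fintype m] [DecidableEq m] [Fintype k]
  [DecidableEq k]

theorem det_mul_det_adjugate_toBlocks₂₂ (A : Matrix (m ⊕ k) (m ⊕ k) R) :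
    A.det * A.adjugate.toBlocks₂₂.det = A.det ^ Fintype.card k * A.toBlocks₁₁.det := by
  let N := fromBlocks (1 : Matrix m m R) A.adjugate.toBlocks₁₂ 0 A.adjugate.toBlocks₂₂
  have hN : ∀ c b, N c (Sum.inr b) = A.adjugate c (Sum.inr b) := by
    rintro (c | c) b <;> rfl
  have hAN : A * N = fromBlocks A.toBlocks₁₁ 0 A.toBlocks₂₁ (A.det • 1) := by
    ext x (b | b)
    · rcases x with x | x <;>
        simp [N, mul_apply, Fintype.sum_sum_type, Matrix.one_apply, toBlocks₁₁, toBlocks₂₁]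
    · rw [mul_apply]
      simp only [hN]
      rw [← mul_apply, mul_adjugate]
      rcases x with x | x <;> simp [fromBlocks, Matrix.one_apply]
  calc A.det * A.adjugate.toBlocks₂₂.det = (A * N).det := by
        rw [det_mul, det_fromBlocks_zero₂₁, det_one, one_mul]
    _ = A.det ^ Fintype.card k * A.toBlocks₁₁.det := by
        rw [hAN, det_fromBlocks_zero₁₂, det_smul, det_one, mul_one, mul_comm]

theorem det_adjugate_toBlocks₂₂ [Nonempty k] (A : Matrix (m ⊕ k) (m ⊕ k) R) :
    A.adjugate.toBlocks₂₂.det = A.det ^ (Fintype.card k - 1) * A.toBlocks₁₁.det := by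
  let X := mvPolynomialX (m ⊕ k) (m ⊕ k) ℤ
  suffices X.adjugate.toBlocks₂₂.det = X.det ^ (Fintype.card k - 1) * X.toBlocks₁₁.det by
    let φ := MvPolynomial.aeval (R := ℤ) fun p : (m ⊕ k) × (m ⊕ k) => A p.1 p.2
    have h := congrArg φ this
    rw [map_mul, map_pow, AlgHom.map_det, AlgHom.map_det, AlgHom.map_det] at h
    rw [← mvPolynomialX_mapMatrix_aeval ℤ A, ← AlgHom.map_adjugate]
    exact h
  apply mul_left_cancel₀ (det_mvPolynomialX_ne_zero (m ⊕ k) ℤ)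
  rw [det_mul_det_adjugate_toBlocks₂₂, ← mul_assoc, ← pow_succ',
    Nat.sub_add_cancel Fintype.card_pos]

theorem det_submatrix_adjugate_comp_inr {ι : Type*} [Fintype ι] [DecidableEq ι] [Nonempty k]
    (σ : m ⊕ k ≃ ι) (A : Matrix ι ι R) :
    (A.adjugate.submatrix (σ ∘ Sum.inr) (σ ∘ Sum.inr)).det
      = A.det ^ (Fintype.card k - 1) * (A.submatrix (σ ∘ Sum.inl) (σ ∘ Sum.inl)).det := by
  have h := det_adjugate_toBlocks₂₂ (A.submatrix σ σ)
  rw [adjugate_submatrix_equiv_self, det_submatrix_equiv_self] at h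
  exact h

theorem adjugate_fin_succ_self {n : ℕ} (A : Matrix (Fin (n + 1)) (Fin (n + 1)) R)
    (i : Fin (n + 1)) :
    A.adjugate i i = (A.submatrix i.succAbove i.succAbove).det := by
  rw [adjugate_fin_succ_eq_det_submatrix, Even.neg_one_pow ⟨i, rfl⟩, one_mul]

theorem adjugate_fin_succ_mul_adjugate_swap {n : ℕ} (A : Matrix (Fin (n + 1)) (Fin (n + 1)) R)
    (i j : Fin (n + 1)) :
    A.adjugate i j * A.adjugate j i
      = (A.submatrix j.succAbove i.succAbove).det * (A.submatrix i.succAbove j.succAbove).det := by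
  rw [adjugate_fin_succ_eq_det_submatrix, adjugate_fin_succ_eq_det_submatrix, add_comm (i : ℕ),
    mul_mul_mul_comm, ← pow_add, Even.neg_one_pow ⟨_, rfl⟩, one_mul]

end Matrix

open Matrix

/-- **Dodgson condensation (Desnanot–Jacobi identity).**
For an `(n+2) × (n+2)` matrix `A` over a commutative ring and distinct indices `i ≠ j`,
writing `A.submatrix a.succAbove b.succAbove` for `A` with row `a` and column `b` removed,
and `A.submatrix e e` (where `e : Fin n → Fin (n+2)` is the strictly monotone map avoiding
`i` and `j`) for `A` with rows `i, j` and columns `i, j` removed, we have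
`det A(i;i) ⬝ det A(j;j) − det A(i;j) ⬝ det A(j;i) = det A ⬝ det A(i,j;i,j)`. -/
theorem dodgson_condensation {R : Type*} [CommRing R] {n : ℕ}
    (A : Matrix (Fin (n + 2)) (Fin (n + 2)) R) (i j : Fin (n + 2)) (hij : i ≠ j)
    (e : Fin n → Fin (n + 2)) (he : StrictMono e)
    (hei : ∀ x, e x ≠ i) (hej : ∀ x, e x ≠ j) :
    (A.submatrix i.succAbove i.succAbove).det * (A.submatrix j.succAbove j.succAbove).det
      - (A.submatrix i.succAbove j.succAbove).det * (A.submatrix j.succAbove i.succAbove).det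
      = A.det * (A.submatrix e e).det := by
  have hinj : Function.Injective (Sum.elim e ![i, j]) := by
    refine he.injective.sumElim ?_ fun x b => ?_
    · exact Fin.cons_injective_iff.2 ⟨by simpa using hij, Function.injective_of_subsingleton _⟩
    · fin_cases b
      exacts [hei x, hej x]
  let σ : Fin n ⊕ Fin 2 ≃ Fin (n + 2) :=
    Equiv.ofBijective _ ((Fintype.bijective_iff_injective_and_card _).2
      ⟨hinj, by simp only [Fintype.card_sum, Fintype.card_fin]⟩)
  have h := det_submatrix_adjugate_comp_inr σ A
  rw [det_fin_two] at h
  change A.adjugate i i * A.adjugate j j - A.adjugate i j * A.adjugate j i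
    = A.det ^ 1 * (A.submatrix e e).det at h
  rw [← adjugate_fin_succ_self, ← adjugate_fin_succ_self,
    mul_comm (A.submatrix i.succAbove j.succAbove).det, ← adjugate_fin_succ_mul_adjugate_swap, h,
    pow_one]
end

section
/- Let f(x,y) be (k−1)-times differentiable in each of x and y. Then applying both Vandermonde determinants of differential operators Δ(d/dx) and Δ(d/dy) to ∏_{i=1}^k f(x_i, y_i) and evaluating at x₁ = ⋯ = x_k = X, y₁ = ⋯ = y_k = Y gives k! · det_{k×k}( ∂^{i+j−2} f / ∂X^{i−1} ∂Y^{j−1} (X,Y) ). -/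
/-!
Umbral calculus. Write `G a b` for `∂ₓᵃ ∂ᵧᵇ f` and send a monomial `∏ᵢ xᵢ^aᵢ yᵢ^bᵢ` in `2k`
variables to the function `(x, y) ↦ ∏ᵢ G aᵢ bᵢ xᵢ yᵢ`, extending linearly. Under this map
`∂/∂xᵢ` and `∂/∂yᵢ` become multiplication by `xᵢ` and `yᵢ` as long as all exponents stay at most
`k - 1`: then only derivatives of order at most `2(k - 1)` occur, and these exist and commute
(Clairaut) for `f ∈ C^{2(k-1)}`. No variable occurs in more than `k - 1` factors of `Δ(x) Δ(y)`,
so this holds throughout. As `∏ᵢ f(xᵢ, yᵢ)` is the image of `1`, `Δ(d/dx) Δ(d/dy)` of it is the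
image of `Δ(x) Δ(y)`, a product of two Vandermonde determinants (the signs from `xᵢ - xⱼ` versus
`xⱼ - xᵢ` cancel between the two). Expanding both determinants and evaluating on the diagonal
gives `∑_{σ,τ} sgn σ sgn τ ∏ᵢ G (σ i) (τ i) X Y`, which is `k!` times `det (G i j X Y)`.
-/

open scoped Nat

/-- Partial derivative in the `i`-th coordinate of the first block of variables. -/
noncomputable def partialDx {k : ℕ} (i : Fin k)
    (F : (Fin k → ℝ) × (Fin k → ℝ) → ℝ) : (Fin k → ℝ) × (Fin k → ℝ) → ℝ :=
  fun z => deriv (fun t => F (Function.update z.1 i t, z.2)) (z.1 i)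

/-- Partial derivative in the `i`-th coordinate of the second block of variables. -/
noncomputable def partialDy {k : ℕ} (i : Fin k)
    (F : (Fin k → ℝ) × (Fin k → ℝ) → ℝ) : (Fin k → ℝ) × (Fin k → ℝ) → ℝ :=
  fun z => deriv (fun t => F (z.1, Function.update z.2 i t)) (z.2 i)

/-- The list of pairs `(i, j)` with `1 ≤ i < j ≤ k`. -/
def pairList (k : ℕ) : List (Fin k × Fin k) :=
  (List.finRange k).flatMap fun i =>
    ((List.finRange k).filter fun j => i < j).map fun j => (i, j)

/-- `Δ(d/dx) = ∏_{1≤i<j≤k}(∂/∂xᵢ − ∂/∂xⱼ)` acting in the first block of variables. -/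
noncomputable def vandermondeDx {k : ℕ} :
    ((Fin k → ℝ) × (Fin k → ℝ) → ℝ) → ((Fin k → ℝ) × (Fin k → ℝ) → ℝ) :=
  ((pairList k).map fun p F => partialDx p.1 F - partialDx p.2 F).foldr (· ∘ ·) id

/-- `Δ(d/dy) = ∏_{1≤i<j≤k}(∂/∂yᵢ − ∂/∂yⱼ)` acting in the second block of variables. -/
noncomputable def vandermondeDy {k : ℕ} :
    ((Fin k → ℝ) × (Fin k → ℝ) → ℝ) → ((Fin k → ℝ) × (Fin k → ℝ) → ℝ) :=
  ((pairList k).map fun p F => partialDy p.1 F - partialDy p.2 F).foldr (· ∘ ·) id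

section DirectionalDerivative

variable {E : Type*} [NormedAddCommGroup E] [NormedSpace ℝ E]

noncomputable def dirDeriv (e : E) (F : E → ℝ) : E → ℝ := fun p => fderiv ℝ F p e

theorem contDiff_dirDeriv {n : ℕ} {F : E → ℝ} (e : E) (hF : ContDiff ℝ (n + 1 : ℕ) F) :
    ContDiff ℝ n (dirDeriv e F) :=
  (hF.fderiv_right (by norm_cast)).clm_apply contDiff_const

theorem contDiff_iterate_dirDeriv {n : ℕ} (a : ℕ) {F : E → ℝ} (e : E)
    (hF : ContDiff ℝ (n + a : ℕ) F) : ContDiff ℝ n ((dirDeriv e)^[a] F) := by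
  induction a generalizing F with
  | zero => simpa using hF
  | succ a ih =>
    rw [Function.iterate_succ_apply]
    exact ih (contDiff_dirDeriv e hF)

theorem dirDeriv_comm {F : E → ℝ} (hF : ContDiff ℝ 2 F) (e e' : E) :
    dirDeriv e (dirDeriv e' F) = dirDeriv e' (dirDeriv e F) := by
  funext p
  have hdiff : Differentiable ℝ (fderiv ℝ F) :=
    (hF.fderiv_right (m := 1) (by norm_num)).differentiable (by norm_num)
  have hsymm : IsSymmSndFDerivAt ℝ F p := hF.contDiffAt.isSymmSndFDerivAt (by simp)
  change fderiv ℝ (fun q => fderiv ℝ F q e') p e = fderiv ℝ (fun q => fderiv ℝ F q e) p e'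
  simp only [fderiv_clm_apply (hdiff p) (differentiableAt_const _), fderiv_const_apply]
  simpa using hsymm.eq e e'

theorem dirDeriv_iterate_comm (b : ℕ) {F : E → ℝ} (hF : ContDiff ℝ (b + 1 : ℕ) F) (e e' : E) :
    dirDeriv e ((dirDeriv e')^[b] F) = (dirDeriv e')^[b] (dirDeriv e F) := by
  induction b generalizing F with
  | zero => rfl
  | succ b ih =>
    rw [Function.iterate_succ_apply, Function.iterate_succ_apply,
      ih (contDiff_dirDeriv e' (by simpa using hF)), dirDeriv_comm (hF.of_le (by norm_cast; omega))]

theorem DifferentiableAt.hasDerivAt_comp_dirDeriv {F : E → ℝ} {γ : ℝ → E} {e : E} {t : ℝ}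
    (hF : DifferentiableAt ℝ F (γ t)) (hγ : HasDerivAt γ e t) :
    HasDerivAt (F ∘ γ) (dirDeriv e F (γ t)) t :=
  hF.hasFDerivAt.comp_hasDerivAt t hγ

theorem iteratedDeriv_comp_eq_iterate_dirDeriv {n : ℕ} {F : E → ℝ} (hF : ContDiff ℝ n F)
    {γ : ℝ → E} {e : E} (hγ : ∀ t, HasDerivAt γ e t) :
    iteratedDeriv n (F ∘ γ) = (dirDeriv e)^[n] F ∘ γ := by
  induction n with
  | zero => rfl
  | succ n ih =>
    have hdiff : Differentiable ℝ ((dirDeriv e)^[n] F) :=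
      (contDiff_iterate_dirDeriv (n := 1) n e (by simpa [add_comm] using hF)).differentiable
        one_ne_zero
    ext t
    rw [iteratedDeriv_succ, ih (hF.of_le (by norm_cast; omega)),
      ((hdiff _).hasDerivAt_comp_dirDeriv (hγ t)).deriv, Function.comp_apply,
      Function.iterate_succ_apply']

end DirectionalDerivative

structure HasMixedPartials (G : ℕ → ℕ → ℝ → ℝ → ℝ) (M : ℕ) : Prop where
  hasDerivAt_fst {a b : ℕ} : a < M → b ≤ M → ∀ x y,
    HasDerivAt (fun t => G a b t y) (G (a + 1) b x y) x
  hasDerivAt_snd {a b : ℕ} : a ≤ M → b < M → ∀ x y,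
    HasDerivAt (fun t => G a b x t) (G a (b + 1) x y) y

section MixedPartial

noncomputable def mixedPartial (F : ℝ × ℝ → ℝ) (a b : ℕ) : ℝ × ℝ → ℝ :=
  (dirDeriv (0, 1))^[b] ((dirDeriv (1, 0))^[a] F)

variable {F : ℝ × ℝ → ℝ} {N : ℕ}

theorem contDiff_mixedPartial {n a b : ℕ} (hF : ContDiff ℝ N F) (h : n + a + b ≤ N) :
    ContDiff ℝ n (mixedPartial F a b) :=
  contDiff_iterate_dirDeriv b _ <| contDiff_iterate_dirDeriv a _ <|
    hF.of_le (by norm_cast; omega)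

theorem hasDerivAt_mixedPartial_fst (hF : ContDiff ℝ N F) {a b : ℕ} (h : a + b < N) (x y : ℝ) :
    HasDerivAt (fun t => mixedPartial F a b (t, y)) (mixedPartial F (a + 1) b (x, y)) x := by
  have hcomm : mixedPartial F (a + 1) b = dirDeriv (1, 0) (mixedPartial F a b) := by
    rw [mixedPartial, mixedPartial, Function.iterate_succ_apply', dirDeriv_iterate_comm b
      (contDiff_iterate_dirDeriv a _ (hF.of_le (by norm_cast; omega)))]
  rw [hcomm]
  exact ((contDiff_mixedPartial (n := 1) hF (by omega)).differentiable one_ne_zero _)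
    |>.hasDerivAt_comp_dirDeriv ((hasDerivAt_id x).prodMk (hasDerivAt_const x y))

theorem hasDerivAt_mixedPartial_snd (hF : ContDiff ℝ N F) {a b : ℕ} (h : a + b < N) (x y : ℝ) :
    HasDerivAt (fun t => mixedPartial F a b (x, t)) (mixedPartial F a (b + 1) (x, y)) y := by
  rw [show mixedPartial F a (b + 1) = dirDeriv (0, 1) (mixedPartial F a b) from
    Function.iterate_succ_apply' ..]
  exact ((contDiff_mixedPartial (n := 1) hF (by omega)).differentiable one_ne_zero _)
    |>.hasDerivAt_comp_dirDeriv ((hasDerivAt_const y x).prodMk (hasDerivAt_id y))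

theorem iteratedDeriv_iteratedDeriv_eq_mixedPartial {f : ℝ → ℝ → ℝ} {a b : ℕ}
    (hf : ContDiff ℝ N (Function.uncurry f)) (h : a + b ≤ N) (x y : ℝ) :
    iteratedDeriv b (fun y => iteratedDeriv a (fun x => f x y) x) y
      = mixedPartial (Function.uncurry f) a b (x, y) := by
  have hx (y : ℝ) : iteratedDeriv a (fun x => f x y) = _ :=
    iteratedDeriv_comp_eq_iterate_dirDeriv (hf.of_le (by norm_cast; omega))
      (fun t => (hasDerivAt_id t).prodMk (hasDerivAt_const t y))
  simp only [hx]
  exact congrFun (iteratedDeriv_comp_eq_iterate_dirDeriv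
    (contDiff_iterate_dirDeriv a _ (hf.of_le (by norm_cast; omega)))
    (fun t => (hasDerivAt_const t x).prodMk (hasDerivAt_id t))) y

theorem hasMixedPartials_mixedPartial {M : ℕ} (hF : ContDiff ℝ (2 * M : ℕ) F) :
    HasMixedPartials (fun a b x y => mixedPartial F a b (x, y)) M where
  hasDerivAt_fst ha hb := hasDerivAt_mixedPartial_fst hF (by omega)
  hasDerivAt_snd ha hb := hasDerivAt_mixedPartial_snd hF (by omega)

end MixedPartial

section EdgeLists

open MvPolynomial

variable {σ R : Type*}

def vertexDegree [DecidableEq σ] (L : List (σ × σ)) (a : σ) : ℕ :=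
  (L.map fun p => if p.1 = a ∨ p.2 = a then 1 else 0).sum

theorem vertexDegree_cons [DecidableEq σ] (p : σ × σ) (L : List (σ × σ)) (a : σ) :
    vertexDegree (p :: L) a = (if p.1 = a ∨ p.2 = a then 1 else 0) + vertexDegree L a := by
  simp [vertexDegree]

noncomputable def pairProd [CommRing R] (L : List (σ × σ)) : MvPolynomial σ R :=
  (L.map fun p => X p.1 - X p.2).prod

theorem pairProd_cons [CommRing R] (p : σ × σ) (L : List (σ × σ)) :
    (pairProd (p :: L) : MvPolynomial σ R) = (X p.1 - X p.2) * pairProd L := by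
  simp [pairProd]

theorem degreeOf_pairProd_le [CommRing R] [Nontrivial R] [DecidableEq σ] (L : List (σ × σ))
    (w : σ) : degreeOf w (pairProd L : MvPolynomial σ R) ≤ vertexDegree L w := by
  induction L with
  | nil => simp [pairProd, vertexDegree]
  | cons p L ih =>
    rw [pairProd_cons, vertexDegree_cons]
    refine (degreeOf_mul_le _ _ _).trans (add_le_add ?_ ih)
    refine (degreeOf_sub_le _ _ _).trans ?_
    rw [degreeOf_X, degreeOf_X]
    split_ifs <;> simp_all

end EdgeLists

section PairList

open Finset

variable {k : ℕ}

@[to_additive]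
theorem prod_map_pairList {M : Type*} [CommMonoid M] (g : Fin k × Fin k → M) :
    ((pairList k).map g).prod = ∏ i, ∏ j ∈ Ioi i, g (i, j) := by
  rw [pairList, List.map_flatMap, List.flatMap_def, List.prod_flatten, List.map_map,
    Fin.prod_univ_def]
  congr 1
  refine List.map_congr_left fun i _ => ?_
  have hIoi : ((List.finRange k).filter fun j => i < j).toFinset = Ioi i := by
    ext j; simp
  rw [← hIoi, List.prod_toFinset _ ((List.nodup_finRange k).filter _)]
  simp [List.map_map, Function.comp_def]

theorem vertexDegree_pairList_le (i : Fin k) : vertexDegree (pairList k) i ≤ k - 1 := by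
  calc vertexDegree (pairList k) i
      ≤ ∑ a, ∑ b ∈ Ioi a, ((if a = i then 1 else 0) + if b = i then 1 else 0) := by
        rw [vertexDegree, sum_map_pairList]
        gcongr
        dsimp only
        split_ifs <;> simp_all
    _ = #(Ioi i) + #(Iio i) := by simp [sum_add_distrib, sum_boole, filter_gt_eq_Iio]
    _ = k - 1 := by simp; omega

end PairList

section VandermondeAlgebra

open Finset Matrix Equiv

variable {R : Type*} [CommRing R] {k : ℕ}

theorem prod_Ioi_sub_mul_prod_Ioi_sub (v w : Fin k → R) :
    (∏ i, ∏ j ∈ Ioi i, (v i - v j)) * ∏ i, ∏ j ∈ Ioi i, (w i - w j)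
      = (vandermonde v).det * (vandermonde w).det := by
  have hsign (u : Fin k → R) : ∏ i, ∏ j ∈ Ioi i, (u i - u j)
      = (∏ i : Fin k, (-1) ^ #(Ioi i)) * (vandermonde u).det := by
    simp only [det_vandermonde, ← prod_mul_distrib, ← prod_neg, neg_sub]
  rw [hsign, hsign, mul_mul_mul_comm, ← prod_mul_distrib]
  simp [← mul_pow]

theorem det_vandermonde_eq_sum (v : Fin k → R) :
    (vandermonde v).det = ∑ σ : Perm (Fin k), Perm.sign σ • ∏ i, v i ^ (σ i : ℕ) := by
  rw [← det_transpose, det_apply]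
  rfl

theorem sum_sign_smul_sign_smul_prod (A : Matrix (Fin k) (Fin k) R) :
    ∑ σ : Perm (Fin k), ∑ τ : Perm (Fin k), Perm.sign σ • Perm.sign τ • ∏ i, A (σ i) (τ i)
      = k ! • A.det := by
  have hrow (σ : Perm (Fin k)) :
      ∑ τ : Perm (Fin k), Perm.sign τ • ∏ i, A (σ i) (τ i) = Perm.sign σ • A.det := by
    rw [Units.smul_def, zsmul_eq_mul, ← det_permute, ← det_transpose, det_apply]
    rfl
  calc _ = ∑ σ : Perm (Fin k), Perm.sign σ • Perm.sign σ • A.det := by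
        simp_rw [← smul_sum, hrow]
    _ = k ! • A.det := by simp [smul_smul, Fintype.card_perm]

end VandermondeAlgebra

section Umbral

open MvPolynomial Finset Matrix Function

variable {k : ℕ}

-- `Sum.inl i` stands for the variable `xᵢ`, `Sum.inr i` for `yᵢ`.
noncomputable def umbralTerm (G : ℕ → ℕ → ℝ → ℝ → ℝ) (m : (Fin k ⊕ Fin k) →₀ ℕ)
    (z : (Fin k → ℝ) × (Fin k → ℝ)) : ℝ :=
  ∏ i, G (m (.inl i)) (m (.inr i)) (z.1 i) (z.2 i)

noncomputable def umbralEval (G : ℕ → ℕ → ℝ → ℝ → ℝ) :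
    MvPolynomial (Fin k ⊕ Fin k) ℝ →ₗ[ℝ] ((Fin k → ℝ) × (Fin k → ℝ) → ℝ) :=
  (basisMonomials _ ℝ).constr ℝ (umbralTerm G)

variable {G : ℕ → ℕ → ℝ → ℝ → ℝ} {M : ℕ}

theorem umbralEval_monomial (m : (Fin k ⊕ Fin k) →₀ ℕ) (c : ℝ) :
    umbralEval G (monomial m c) = c • umbralTerm G m := by
  rw [← mul_one c, ← smul_eq_mul, ← smul_monomial, map_smul, umbralEval, smul_eq_mul, mul_one]
  congr 1
  simpa using (basisMonomials _ ℝ).constr_basis ℝ (umbralTerm G) m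

theorem umbralEval_apply (P : MvPolynomial (Fin k ⊕ Fin k) ℝ) (z : (Fin k → ℝ) × (Fin k → ℝ)) :
    umbralEval G P z = ∑ m ∈ P.support, P.coeff m * umbralTerm G m z := by
  conv_lhs => rw [P.as_sum]
  rw [map_sum, Finset.sum_apply]
  simp only [umbralEval_monomial, Pi.smul_apply, smul_eq_mul]

theorem umbralEval_X_mul (v : Fin k ⊕ Fin k) (P : MvPolynomial (Fin k ⊕ Fin k) ℝ)
    (z : (Fin k → ℝ) × (Fin k → ℝ)) :
    umbralEval G (X v * P) z
      = ∑ m ∈ P.support, P.coeff m * umbralTerm G (Finsupp.single v 1 + m) z := by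
  simp [umbralEval_apply, support_X_mul, coeff_X_mul]

theorem umbralEval_one (z : (Fin k → ℝ) × (Fin k → ℝ)) :
    umbralEval G 1 z = ∏ i, G 0 0 (z.1 i) (z.2 i) := by
  simpa [umbralTerm] using congrFun (umbralEval_monomial (G := G) 0 1) z

theorem hasDerivAt_prod_update {ι : Type*} [Fintype ι] [DecidableEq ι] {g : ι → ℝ → ℝ}
    {x : ι → ℝ} {j : ι} {d : ℝ} (h : HasDerivAt (g j) d (x j)) :
    HasDerivAt (fun t => ∏ i, g i (update x j t i)) (∏ i, update (fun i => g i (x i)) j d i)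
      (x j) := by
  simp only [apply_update g, prod_update_of_mem (mem_univ j)]
  exact h.mul_const _

theorem hasDerivAt_umbralTerm_fst (hG : HasMixedPartials G M) {m : (Fin k ⊕ Fin k) →₀ ℕ}
    {j : Fin k} (hj : m (.inl j) < M) (hj' : m (.inr j) ≤ M) (z : (Fin k → ℝ) × (Fin k → ℝ)) :
    HasDerivAt (fun t => umbralTerm G m (update z.1 j t, z.2))
      (umbralTerm G (Finsupp.single (.inl j) 1 + m) z) (z.1 j) := by
  refine (hasDerivAt_prod_update (g := fun i s => G (m (.inl i)) (m (.inr i)) s (z.2 i))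
    (hG.hasDerivAt_fst hj hj' (z.1 j) (z.2 j))).congr_deriv ?_
  unfold umbralTerm
  refine prod_congr rfl fun i _ => ?_
  rcases eq_or_ne i j with rfl | hij
  · simp [add_comm]
  · simp [hij]

theorem hasDerivAt_umbralTerm_snd (hG : HasMixedPartials G M) {m : (Fin k ⊕ Fin k) →₀ ℕ}
    {j : Fin k} (hj : m (.inl j) ≤ M) (hj' : m (.inr j) < M) (z : (Fin k → ℝ) × (Fin k → ℝ)) :
    HasDerivAt (fun t => umbralTerm G m (z.1, update z.2 j t))
      (umbralTerm G (Finsupp.single (.inr j) 1 + m) z) (z.2 j) := by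
  refine (hasDerivAt_prod_update (g := fun i s => G (m (.inl i)) (m (.inr i)) (z.1 i) s)
    (hG.hasDerivAt_snd hj hj' (z.1 j) (z.2 j))).congr_deriv ?_
  unfold umbralTerm
  refine prod_congr rfl fun i _ => ?_
  rcases eq_or_ne i j with rfl | hij
  · simp [add_comm]
  · simp [hij]

theorem umbralEval_prod_X_pow_mul_prod_X_pow (a b : Fin k → ℕ)
    (z : (Fin k → ℝ) × (Fin k → ℝ)) :
    umbralEval G ((∏ i, X (.inl i) ^ a i) * ∏ i, X (.inr i) ^ b i) z
      = ∏ i, G (a i) (b i) (z.1 i) (z.2 i) := by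
  have h : (∏ i, X (.inl i) ^ a i) * ∏ i, X (.inr i) ^ b i
      = (∏ v, X v ^ Sum.elim a b v : MvPolynomial (Fin k ⊕ Fin k) ℝ) := by
    simp [Fintype.prod_sum_type]
  rw [h, prod_X_pow, umbralEval_monomial]
  simp [umbralTerm]

theorem umbralEval_det_vandermonde_mul_det_vandermonde (x y : ℝ) :
    umbralEval G
        ((vandermonde fun i : Fin k => X (.inl i)).det * (vandermonde fun i => X (.inr i)).det)
        (fun _ => x, fun _ => y)
      = k ! * (of fun a b : Fin k => G a b x y).det := by
  simp only [det_vandermonde_eq_sum, sum_mul_sum, smul_mul_smul_comm, map_sum, Finset.sum_apply,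
    Units.smul_def, map_zsmul, Pi.smul_apply, umbralEval_prod_X_pow_mul_prod_X_pow]
  rw [← nsmul_eq_mul, ← sum_sign_smul_sign_smul_prod]
  simp [Units.smul_def, mul_smul]

end Umbral

section PairOperators

open MvPolynomial Matrix

variable {k : ℕ} {G : ℕ → ℕ → ℝ → ℝ → ℝ} {M : ℕ}

noncomputable def partialD : Fin k ⊕ Fin k →
    ((Fin k → ℝ) × (Fin k → ℝ) → ℝ) → (Fin k → ℝ) × (Fin k → ℝ) → ℝ :=
  Sum.elim partialDx partialDy

theorem partialD_umbralEval (hG : HasMixedPartials G M) {P : MvPolynomial (Fin k ⊕ Fin k) ℝ}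
    {v : Fin k ⊕ Fin k} (hP : ∀ w, degreeOf w P ≤ M) (hv : degreeOf v P < M) :
    partialD v (umbralEval G P) = umbralEval G (X v * P) := by
  have hlt {m} (hm : m ∈ P.support) : m v < M := (monomial_le_degreeOf v hm).trans_lt hv
  have hle {m} (hm : m ∈ P.support) (w) : m w ≤ M := (monomial_le_degreeOf w hm).trans (hP w)
  funext z
  rw [umbralEval_X_mul]
  cases v with
  | inl j =>
    change deriv (fun t => umbralEval G P (Function.update z.1 j t, z.2)) (z.1 j) = _
    simp only [umbralEval_apply]
    exact (HasDerivAt.fun_sum fun m hm =>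
      (hasDerivAt_umbralTerm_fst hG (hlt hm) (hle hm _) z).const_mul _).deriv
  | inr j =>
    change deriv (fun t => umbralEval G P (z.1, Function.update z.2 j t)) (z.2 j) = _
    simp only [umbralEval_apply]
    exact (HasDerivAt.fun_sum fun m hm =>
      (hasDerivAt_umbralTerm_snd hG (hle hm _) (hlt hm) z).const_mul _).deriv

noncomputable def pairOp (L : List ((Fin k ⊕ Fin k) × (Fin k ⊕ Fin k))) :
    ((Fin k → ℝ) × (Fin k → ℝ) → ℝ) → (Fin k → ℝ) × (Fin k → ℝ) → ℝ :=
  (L.map fun p F => partialD p.1 F - partialD p.2 F).foldr (· ∘ ·) id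

theorem pairOp_umbralEval (hG : HasMixedPartials G M)
    (L : List ((Fin k ⊕ Fin k) × (Fin k ⊕ Fin k))) {P : MvPolynomial (Fin k ⊕ Fin k) ℝ}
    (hP : ∀ w, degreeOf w P + vertexDegree L w ≤ M) :
    pairOp L (umbralEval G P) = umbralEval G (pairProd L * P) := by
  induction L with
  | nil => simp [pairOp, pairProd]
  | cons p L ih =>
    have hQ (w) : degreeOf w (pairProd L * P) + (if p.1 = w ∨ p.2 = w then 1 else 0) ≤ M := by
      have := hP w
      have := degreeOf_mul_le w (pairProd L) P
      have := degreeOf_pairProd_le (R := ℝ) L w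
      rw [vertexDegree_cons] at *
      omega
    have hQle (w) : degreeOf w (pairProd L * P) ≤ M := by have := hQ w; omega
    have hQ₁ : degreeOf p.1 (pairProd L * P) < M := by
      have := hQ p.1; rw [if_pos (Or.inl rfl)] at this; omega
    have hQ₂ : degreeOf p.2 (pairProd L * P) < M := by
      have := hQ p.2; rw [if_pos (Or.inr rfl)] at this; omega
    have hPL (w) : degreeOf w P + vertexDegree L w ≤ M := by
      have := hP w; rw [vertexDegree_cons] at this; omega
    change partialD p.1 (pairOp L _) - partialD p.2 (pairOp L _) = _
    rw [ih hPL, partialD_umbralEval hG hQle hQ₁, partialD_umbralEval hG hQle hQ₂, ← map_sub,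
      ← sub_mul, pairProd_cons, mul_assoc]

def vandermondePairs (k : ℕ) : List ((Fin k ⊕ Fin k) × (Fin k ⊕ Fin k)) :=
  (pairList k).map (Prod.map .inl .inl) ++ (pairList k).map (Prod.map .inr .inr)

theorem pairOp_append (L L' : List ((Fin k ⊕ Fin k) × (Fin k ⊕ Fin k))) :
    pairOp (L ++ L') = pairOp L ∘ pairOp L' := by
  induction L with
  | nil => rfl
  | cons p L ih =>
    simp only [pairOp, List.cons_append, List.map_cons, List.foldr_cons] at ih ⊢
    rw [ih]
    rfl

theorem vandermondeDx_vandermondeDy (F : (Fin k → ℝ) × (Fin k → ℝ) → ℝ) :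
    vandermondeDx (vandermondeDy F) = pairOp (vandermondePairs k) F := by
  rw [vandermondePairs, pairOp_append]
  simp only [vandermondeDx, vandermondeDy, pairOp, List.map_map]
  rfl

theorem vertexDegree_vandermondePairs_le (w : Fin k ⊕ Fin k) :
    vertexDegree (vandermondePairs k) w ≤ k - 1 := by
  cases w <;> simpa [vandermondePairs, vertexDegree, Function.comp_def]
    using vertexDegree_pairList_le _

theorem pairProd_vandermondePairs {R : Type*} [CommRing R] :
    (pairProd (vandermondePairs k) : MvPolynomial (Fin k ⊕ Fin k) R)
      = (vandermonde fun i => X (.inl i)).det * (vandermonde fun i => X (.inr i)).det := by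
  simp only [pairProd, vandermondePairs, List.map_append, List.prod_append, List.map_map,
    Function.comp_def, Prod.map_fst, Prod.map_snd, prod_map_pairList]
  exact prod_Ioi_sub_mul_prod_Ioi_sub _ _

end PairOperators

/-- For a sufficiently smooth `f : ℝ² → ℝ`, applying `Δ(d/dx)` and `Δ(d/dy)` to
`∏_{i=1}^k f(xᵢ, yᵢ)` and evaluating at `x₁ = ⋯ = x_k = X`, `y₁ = ⋯ = y_k = Y` gives
`k! · det_{k×k}( ∂^{i+j−2} f / ∂X^{i−1} ∂Y^{j−1} (X, Y) )`. -/
theorem vandermondeDxDy_prod {k : ℕ} (f : ℝ → ℝ → ℝ)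
    (hf : ContDiff ℝ ((2 * (k - 1) : ℕ) : ℕ∞) (Function.uncurry f)) (X Y : ℝ) :
    vandermondeDx (vandermondeDy
        (fun z : (Fin k → ℝ) × (Fin k → ℝ) => ∏ i, f (z.1 i) (z.2 i)))
        (fun _ => X, fun _ => Y)
      = (k ! : ℝ) * Matrix.det (Matrix.of fun i j : Fin k =>
          iteratedDeriv (j : ℕ) (fun y => iteratedDeriv (i : ℕ) (fun x => f x y) X) Y) := by
  have hF : ContDiff ℝ (2 * (k - 1) : ℕ) (Function.uncurry f) := hf
  let G a b x y := mixedPartial (Function.uncurry f) a b (x, y)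
  have hprod : (fun z : (Fin k → ℝ) × (Fin k → ℝ) => ∏ i, f (z.1 i) (z.2 i)) = umbralEval G 1 :=
    funext fun z => (umbralEval_one (G := G) z).symm
  rw [hprod, vandermondeDx_vandermondeDy,
    pairOp_umbralEval (hasMixedPartials_mixedPartial hF) _ fun w => by
      simpa using vertexDegree_vandermondePairs_le w,
    mul_one, pairProd_vandermondePairs, umbralEval_det_vandermonde_mul_det_vandermonde]
  congr 3
  ext i j
  exact (iteratedDeriv_iteratedDeriv_eq_mixedPartial hF (by omega) X Y).symm
end

section
/- Partial derivative of the tau determinant in x: with T̃_{k,ℓ}(x,y) = det_{k×k}(g̃_{2i−j+ℓ}(x,y)) where ∂g̃_m/∂x = g̃_{m−1}, one has ∂T̃_{k,ℓ}/∂x = det of the (k+1)×(k+1) matrix A_{k+1,ℓ} = (g̃_{2i−j+ℓ})_{1≤i,j≤k+1} with row k+1 and column k removed. -/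
open scoped Nat

/-- `g̃_m(x,y) = Σ_{j ≥ 0, m+2j ≥ 0} x^{m+2j} y^j / (j! (m+2j)!)`. -/
noncomputable def gTilde (m : ℤ) (x y : ℂ) : ℂ :=
  ∑' j : ℕ, if 0 ≤ m + 2 * (j : ℤ) then
    x ^ (m + 2 * (j : ℤ)).toNat * y ^ j / ((j ! : ℂ) * ((m + 2 * (j : ℤ)).toNat ! : ℂ))
  else 0

/-- The two-variable tau function `T̃_{k,ℓ}(x,y) = det_{k×k}(g̃_{2i−j+ℓ}(x,y))`. -/
noncomputable def tauTilde (k : ℕ) (ℓ : ℤ) (x y : ℂ) : ℂ :=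
  Matrix.det (Matrix.of fun i j : Fin k => gTilde (2 * (i : ℤ) - (j : ℤ) + 1 + ℓ) x y)

/-- The `(k+1) × (k+1)` matrix `A_{k+1,ℓ}` with `(i,j)` entry `g̃_{2i−j+ℓ}(x,y)`
(1-based `i, j ∈ {1, …, k+1}`, realized with 0-based `Fin (k+1)` indices). -/
noncomputable def Amat (k : ℕ) (ℓ : ℤ) (x y : ℂ) : Matrix (Fin (k + 1)) (Fin (k + 1)) ℂ :=
  Matrix.of fun i j : Fin (k + 1) => gTilde (2 * (i : ℤ) - (j : ℤ) + 1 + ℓ) x y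

/-!
Each term of the series for `g̃_m` is `x^{m+2j}/(m+2j)! · y^j/j!`, so `∂ₓ g̃_m = g̃_{m-1}`
termwise, and the series of derivatives is dominated by `e^R · |y|^j/j!` on `|x| < R`.
Differentiating `T̃_{k,ℓ}` column by column therefore replaces column `j` by
`(g̃_{2i-(j+1)+ℓ})_i`, which for `j < k` is column `j + 1` of the same matrix; all these
determinants vanish, and the remaining one, with the last column replaced by column `k + 1`
of `A_{k+1,ℓ}`, is the claimed minor.
-/

section PowDivFactorial

variable {𝕜 : Type*} [RCLike 𝕜]

noncomputable def powDivFactorial (n : ℤ) (z : 𝕜) : 𝕜 :=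
  if 0 ≤ n then z ^ n.toNat / (n.toNat ! : 𝕜) else 0

theorem hasDerivAt_powDivFactorial (n : ℤ) (z : 𝕜) :
    HasDerivAt (powDivFactorial n) (powDivFactorial (n - 1) z) z := by
  rcases lt_trichotomy n 0 with hn | rfl | hn
  · have hzero : powDivFactorial (𝕜 := 𝕜) n = 0 := funext fun _ => if_neg hn.not_ge
    rw [hzero, powDivFactorial, if_neg (by omega)]
    exact hasDerivAt_const z 0
  · have hone : powDivFactorial (𝕜 := 𝕜) 0 = fun _ => 1 := funext fun _ => by simp [powDivFactorial]
    rw [hone, powDivFactorial, if_neg (by omega)]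
    exact hasDerivAt_const z 1
  · obtain ⟨a, rfl⟩ : ∃ a : ℕ, n = (a + 1 : ℕ) := ⟨n.toNat - 1, by omega⟩
    have hpow : powDivFactorial (𝕜 := 𝕜) (a + 1 : ℕ) = fun w => w ^ (a + 1) / ((a + 1)! : 𝕜) :=
      funext fun w => by simp only [powDivFactorial, if_pos hn.le, Int.toNat_natCast]
    rw [hpow]
    refine ((hasDerivAt_pow (a + 1) z).div_const ((a + 1)! : 𝕜)).congr_deriv ?_
    rw [powDivFactorial, if_pos (by omega), show ((a + 1 : ℕ) - 1 : ℤ).toNat = a by omega,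
      Nat.factorial_succ, Nat.add_sub_cancel, Nat.cast_mul]
    exact mul_div_mul_left _ _ (Nat.cast_ne_zero.mpr a.succ_ne_zero)

theorem norm_powDivFactorial_le {n : ℤ} {z : 𝕜} {R : ℝ} (hz : ‖z‖ ≤ R) :
    ‖powDivFactorial n z‖ ≤ Real.exp R := by
  unfold powDivFactorial
  split_ifs
  · rw [norm_div, norm_pow, RCLike.norm_natCast]
    calc ‖z‖ ^ n.toNat / n.toNat ! ≤ R ^ n.toNat / n.toNat ! := by gcongr
      _ ≤ Real.exp R := Real.pow_div_factorial_le_exp R ((norm_nonneg z).trans hz) _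
  · simpa using (Real.exp_pos R).le

end PowDivFactorial

theorem gTilde_eq_tsum (m : ℤ) (x y : ℂ) :
    gTilde m x y = ∑' j : ℕ, powDivFactorial (m + 2 * j) x * (y ^ j / j !) := by
  refine tsum_congr fun j => ?_
  unfold powDivFactorial
  split_ifs
  · ring
  · rw [zero_mul]

theorem hasDerivAt_gTilde (m : ℤ) (x y : ℂ) :
    HasDerivAt (fun x' => gTilde m x' y) (gTilde (m - 1) x y) x := by
  simp only [gTilde_eq_tsum, sub_add_eq_add_sub]
  set R := ‖x‖ + 1
  have hx : x ∈ Metric.ball 0 R := by simp [R]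
  have hbound (n : ℤ) (j : ℕ) (z : ℂ) (hz : z ∈ Metric.ball 0 R) :
      ‖powDivFactorial n z * (y ^ j / j !)‖ ≤ Real.exp R * (‖y‖ ^ j / j !) := by
    rw [norm_mul, norm_div, norm_pow, Complex.norm_natCast]
    gcongr
    exact norm_powDivFactorial_le (by simpa using (Metric.mem_ball.mp hz).le)
  have hsummable : Summable fun j : ℕ => Real.exp R * (‖y‖ ^ j / j !) :=
    (Real.summable_pow_div_factorial ‖y‖).mul_left _
  exact hasDerivAt_tsum_of_isPreconnected hsummable Metric.isOpen_ball
    (convex_ball 0 R).isPreconnected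
    (fun j z _ => (hasDerivAt_powDivFactorial _ z).mul_const _)
    (fun j z hz => hbound _ j z hz) hx (hsummable.of_norm_bounded fun j => hbound _ j x hx) hx

open Finset in
theorem Matrix.hasDerivAt_det {𝕜 𝔸 : Type*} [NontriviallyNormedField 𝕜] [NormedCommRing 𝔸]
    [NormedAlgebra 𝕜 𝔸] {n : Type*} [Fintype n] [DecidableEq n] {M : 𝕜 → Matrix n n 𝔸}
    {M' : Matrix n n 𝔸} {x : 𝕜} (h : ∀ i j, HasDerivAt (fun z => M z i j) (M' i j) x) :
    HasDerivAt (fun z => (M z).det) (∑ c, ((M x).updateCol c fun i => M' i c).det) x := by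
  have hterms := HasDerivAt.fun_sum (u := univ)
    (A := fun (σ : Equiv.Perm n) z => ((Equiv.Perm.sign σ : ℤ) : 𝔸) * ∏ i, M z (σ i) i)
    fun σ _ => (HasDerivAt.fun_finsetProd fun i _ => h (σ i) i).const_mul _
  simp only [← Matrix.det_apply'] at hterms
  refine hterms.congr_deriv ?_
  have expand (c : n) (σ : Equiv.Perm n) :
      ∏ i, ((M x).updateCol c fun r => M' r c) (σ i) i
        = (∏ i ∈ univ.erase c, M x (σ i) i) • M' (σ c) c := by
    rw [← mul_prod_erase univ _ (mem_univ c), smul_eq_mul, mul_comm]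
    congr 1
    · exact prod_congr rfl fun i hi => by simp [ne_of_mem_erase hi]
    · simp
  simp only [Matrix.det_apply', expand, mul_sum]
  exact sum_comm

theorem Matrix.sum_det_updateCol_succ {R : Type*} [CommRing R] {n : ℕ}
    (A : Matrix (Fin (n + 1)) (Fin (n + 2)) R) :
    ∑ c : Fin (n + 1), ((A.submatrix id Fin.castSucc).updateCol c fun i => A i c.succ).det
      = (A.submatrix id (Fin.castSucc (Fin.last n)).succAbove).det := by
  rw [Finset.sum_eq_single_of_mem (Fin.last n) (Finset.mem_univ _)]
  · congr 1
    ext i j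
    rcases Fin.eq_castSucc_or_eq_last j with ⟨j, rfl⟩ | rfl
    · simp [Fin.succAbove_of_castSucc_lt, (Fin.castSucc_lt_last j).ne]
    · simp
  · intro c _ hc
    obtain ⟨c, rfl⟩ := Fin.exists_castSucc_eq.mpr hc
    -- the new column `c` duplicates the untouched column `c + 1`
    refine Matrix.det_zero_of_column_eq (Fin.castSucc_lt_succ (i := c)).ne fun i => ?_
    simp [(Fin.castSucc_lt_succ (i := c)).ne']

/-- Rows `1, …, k` are kept via `Fin.castSucc`; column `k` (0-based index `k − 1`) is skipped
via `Fin.succAbove`. -/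
theorem deriv_x_tauTilde (k : ℕ) (hk : 1 ≤ k) (ℓ : ℤ) (x y : ℂ) :
    deriv (fun x' => tauTilde k ℓ x' y) x
      = Matrix.det ((Amat k ℓ x y).submatrix Fin.castSucc
          (Fin.succAbove ⟨k - 1, by omega⟩)) := by
  obtain ⟨n, rfl⟩ : ∃ n, k = n + 1 := ⟨k - 1, by omega⟩
  set B := (Amat (n + 1) ℓ x y).submatrix Fin.castSucc id
  -- `∂ₓ g̃_{2i-j+ℓ} = g̃_{2i-(j+1)+ℓ}`: differentiating a column of `T̃` shifts it one step right
  have hentries (i j : Fin (n + 1)) :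
      HasDerivAt (fun x' => gTilde (2 * (i : ℤ) - (j : ℤ) + 1 + ℓ) x' y) (B i j.succ) x := by
    convert hasDerivAt_gTilde _ x y using 2
    simp only [B, Amat, Matrix.submatrix_apply, Matrix.of_apply, id, Fin.val_castSucc,
      Fin.val_succ]
    congr 1
    push_cast
    ring
  have htau : (Matrix.of fun i j : Fin (n + 1) => gTilde (2 * (i : ℤ) - (j : ℤ) + 1 + ℓ) x y)
      = B.submatrix id Fin.castSucc := by
    ext i j
    simp [B, Amat]
  have hcol : (⟨n + 1 - 1, by omega⟩ : Fin (n + 2)) = Fin.castSucc (Fin.last n) :=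
    Fin.ext (by simp)
  have hderiv := Matrix.hasDerivAt_det (M' := B.submatrix id Fin.succ)
    (M := fun x' => Matrix.of fun i j : Fin (n + 1) => gTilde (2 * (i : ℤ) - (j : ℤ) + 1 + ℓ) x' y)
    hentries
  unfold tauTilde
  rw [hderiv.deriv, htau, hcol]
  exact Matrix.sum_det_updateCol_succ B
end

section
/- For w₁,...,w_k nonzero, N a parameter, and G(α₁,...,α_k) = (∏ᵢ αᵢ) e^{N Σᵢ αᵢ} / ∏_{1≤i,j≤k}(w_j² − α_i²), the mixed derivative ∂^{3k}G/∂α₁³⋯∂α_k³ at α₁ = ⋯ = α_k = 0 equals 3^k · (∏_{j=1}^k w_j^{−2k}) · (N² + 2 Σ_{j=1}^k w_j^{−2})^k. -/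
/-- The third partial derivative operator in the `i`-th coordinate, for functions of
`k` complex variables. -/
noncomputable def thirdPartial {k : ℕ} (i : Fin k) (F : (Fin k → ℂ) → ℂ) :
    (Fin k → ℂ) → ℂ :=
  fun α => iteratedDeriv 3 (fun t => F (Function.update α i t)) (α i)

/-- The operator `∂^{3k}/∂α₁³ ⋯ ∂α_k³`: the composition of the third partial derivative
in each of the `k` variables. -/
noncomputable def allThirdPartials (k : ℕ) : ((Fin k → ℂ) → ℂ) → ((Fin k → ℂ) → ℂ) :=
  ((List.finRange k).map fun i => thirdPartial i).foldr (· ∘ ·) id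

/-! The function factors as `∏ᵢ g(αᵢ)` with `g(t) = t e^{Nt} / ∏ⱼ (wⱼ² − t²)`, so the mixed
derivative is `g'''(0)ᵏ`. Writing `g(t) = t E(t)` gives `g'''(0) = 3 E''(0)`, and `E` has
logarithmic derivative `L(t) = N + ∑ⱼ 2t / (wⱼ² − t²)`, whence
`E''(0) = E(0) (L(0)² + L'(0)) = (∏ⱼ wⱼ⁻²) (N² + 2 ∑ⱼ wⱼ⁻²)`. -/

open Filter Topology

theorem thirdPartial_prod {k : ℕ} (i : Fin k) (f : Fin k → ℂ → ℂ) :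
    thirdPartial i (fun α => ∏ j, f j (α j))
      = fun α => ∏ j, Function.update f i (iteratedDeriv 3 (f i)) j (α j) := by
  funext α
  simp only [thirdPartial, Function.apply_update, Function.apply_update (fun j g => g (α j)) f,
    Finset.prod_update_of_mem (Finset.mem_univ i), iteratedDeriv_mul_const_field]

theorem foldr_thirdPartial_prod {k : ℕ} (l : List (Fin k)) (hl : l.Nodup) (f : Fin k → ℂ → ℂ) :
    (l.map thirdPartial).foldr (· ∘ ·) id (fun α => ∏ j, f j (α j))
      = fun α => ∏ j, (if j ∈ l then iteratedDeriv 3 (f j) else f j) (α j) := by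
  induction l with
  | nil => simp
  | cons i l ih =>
    obtain ⟨hi, hl⟩ := List.nodup_cons.mp hl
    rw [List.map_cons, List.foldr_cons, Function.comp_apply, ih hl, thirdPartial_prod]
    congr! 3 with α j
    rcases eq_or_ne j i with rfl | hji
    · simp [hi]
    · simp [hji]

theorem allThirdPartials_prod {k : ℕ} (f : Fin k → ℂ → ℂ) :
    allThirdPartials k (fun α => ∏ j, f j (α j))
      = fun α => ∏ j, iteratedDeriv 3 (f j) (α j) := by
  rw [allThirdPartials, List.map_congr_left fun i _ => rfl,
    foldr_thirdPartial_prod _ (List.nodup_finRange k)]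
  simp

section

variable {𝕜 : Type*} [NontriviallyNormedField 𝕜]

theorem iteratedDeriv_succ_id_mul_zero {n : ℕ} {f : 𝕜 → 𝕜} (hf : ContDiffAt 𝕜 (n + 1) f 0) :
    iteratedDeriv (n + 1) (fun t => t * f t) 0 = (n + 1) * iteratedDeriv n f 0 := by
  rw [iteratedDeriv_fun_mul (by fun_prop) hf, Finset.sum_range_succ', Finset.sum_range_succ']
  simp [iteratedDeriv_fun_id_zero]

theorem iteratedDeriv_two_of_hasDerivAt_mul {f L : 𝕜 → 𝕜} {L' x : 𝕜}
    (hf : ∀ᶠ t in 𝓝 x, HasDerivAt f (f t * L t) t) (hL : HasDerivAt L L' x) :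
    iteratedDeriv 2 f x = f x * (L x ^ 2 + L') := by
  have hderiv : deriv f =ᶠ[𝓝 x] f * L := hf.mono fun t ht => ht.deriv
  rw [iteratedDeriv_succ, iteratedDeriv_one, hderiv.deriv_eq,
    ((hf.self_of_nhds).mul hL).deriv]
  ring

theorem hasDerivAt_finsetProd_of_hasDerivAt_mul {ι : Type*} {s : Finset ι} {f : ι → 𝕜 → 𝕜}
    {L : ι → 𝕜} {x : 𝕜} (hf : ∀ i ∈ s, HasDerivAt (f i) (f i x * L i) x) :
    HasDerivAt (fun t => ∏ i ∈ s, f i t) ((∏ i ∈ s, f i x) * ∑ i ∈ s, L i) x := by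
  classical
  refine (HasDerivAt.fun_finsetProd hf).congr_deriv ?_
  rw [Finset.mul_sum]
  refine Finset.sum_congr rfl fun i hi => ?_
  rw [smul_eq_mul, ← mul_assoc, Finset.prod_erase_mul _ _ hi]

theorem hasDerivAt_inv_sub_sq {a t : 𝕜} (ht : a - t ^ 2 ≠ 0) :
    HasDerivAt (fun t => (a - t ^ 2)⁻¹) ((a - t ^ 2)⁻¹ * (2 * t * (a - t ^ 2)⁻¹)) t := by
  refine (((hasDerivAt_pow 2 t).const_sub a).fun_inv ht).congr_deriv ?_
  field_simp
  norm_num [mul_comm]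

end

section

variable {ι : Type*} [Fintype ι]

theorem hasDerivAt_cexp_mul_prod_inv_sub_sq (a : ι → ℂ) (N : ℂ) {t : ℂ}
    (ht : ∀ j, a j - t ^ 2 ≠ 0) :
    HasDerivAt (fun t => Complex.exp (N * t) * ∏ j, (a j - t ^ 2)⁻¹)
      ((Complex.exp (N * t) * ∏ j, (a j - t ^ 2)⁻¹) * (N + ∑ j, 2 * t * (a j - t ^ 2)⁻¹)) t := by
  have hexp : HasDerivAt (fun t => Complex.exp (N * t)) (Complex.exp (N * t) * N) t := by
    simpa using ((hasDerivAt_id t).const_mul N).cexp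
  have hprod := hasDerivAt_finsetProd_of_hasDerivAt_mul (s := Finset.univ)
    fun j _ => hasDerivAt_inv_sub_sq (ht j)
  exact (hexp.mul hprod).congr_deriv (by ring)

theorem iteratedDeriv_two_cexp_mul_prod_inv_sub_sq_zero (a : ι → ℂ) (ha : ∀ j, a j ≠ 0)
    (N : ℂ) :
    iteratedDeriv 2 (fun t => Complex.exp (N * t) * ∏ j, (a j - t ^ 2)⁻¹) 0
      = (∏ j, (a j)⁻¹) * (N ^ 2 + 2 * ∑ j, (a j)⁻¹) := by
  have hne : ∀ᶠ t in 𝓝 (0 : ℂ), ∀ j, a j - t ^ 2 ≠ 0 := by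
    refine eventually_all.2 fun j => ContinuousAt.eventually_ne (by fun_prop) ?_
    simpa using ha j
  have hterm (j : ι) : HasDerivAt (fun t => 2 * t * (a j - t ^ 2)⁻¹) (2 * (a j)⁻¹) 0 :=
    (((hasDerivAt_id 0).const_mul 2).mul (hasDerivAt_inv_sub_sq (by simpa using ha j))).congr_deriv
      (by simp)
  have hL := (HasDerivAt.fun_sum (u := Finset.univ) fun j _ => hterm j).const_add N
  rw [iteratedDeriv_two_of_hasDerivAt_mul
    (hne.mono fun t ht => hasDerivAt_cexp_mul_prod_inv_sub_sq a N ht) hL]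
  simp [Finset.mul_sum]

theorem iteratedDeriv_three_mul_cexp_div_prod_sub_sq_zero (a : ι → ℂ) (ha : ∀ j, a j ≠ 0)
    (N : ℂ) :
    iteratedDeriv 3 (fun t => t * Complex.exp (N * t) / ∏ j, (a j - t ^ 2)) 0
      = 3 * (∏ j, (a j)⁻¹) * (N ^ 2 + 2 * ∑ j, (a j)⁻¹) := by
  have hsplit : (fun t => t * Complex.exp (N * t) / ∏ j, (a j - t ^ 2))
      = fun t => t * (Complex.exp (N * t) * ∏ j, (a j - t ^ 2)⁻¹) := by
    simp only [div_eq_mul_inv, Finset.prod_inv_distrib, mul_assoc]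
  have hsmooth : ContDiffAt ℂ 3 (fun t => Complex.exp (N * t) * ∏ j, (a j - t ^ 2)⁻¹) 0 :=
    (by fun_prop : ContDiffAt ℂ 3 (fun t => Complex.exp (N * t)) 0).mul
      (contDiffAt_prod fun j _ => ContDiffAt.inv (by fun_prop) (by simpa using ha j))
  rw [hsplit, iteratedDeriv_succ_id_mul_zero hsmooth,
    iteratedDeriv_two_cexp_mul_prod_inv_sub_sq_zero a ha]
  ring

end

/-- For `w₁, …, w_k` nonzero and
`G(α) = (∏ᵢ αᵢ) e^{N Σᵢ αᵢ} / ∏_{i,j} (w_j² − α_i²)`, the mixed derivative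
`∂^{3k}G/∂α₁³⋯∂α_k³` at `α = 0` equals
`3^k (∏_j w_j^{−2k}) (N² + 2 Σ_j w_j^{−2})^k`. -/
theorem mixed_third_derivative (k : ℕ) (w : Fin k → ℂ) (hw : ∀ j, w j ≠ 0) (N : ℂ) :
    allThirdPartials k
        (fun α => (∏ i, α i) * Complex.exp (N * ∑ i, α i)
          / ∏ i, ∏ j, ((w j) ^ 2 - (α i) ^ 2))
        (fun _ => 0)
      = 3 ^ k * (∏ j, (w j) ^ (-(2 * (k : ℤ))))
          * (N ^ 2 + 2 * ∑ j, (w j) ^ (-2 : ℤ)) ^ k := by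
  set g : ℂ → ℂ := fun t => t * Complex.exp (N * t) / ∏ j, ((w j) ^ 2 - t ^ 2)
  have hseparate : (fun α : Fin k → ℂ => (∏ i, α i) * Complex.exp (N * ∑ i, α i)
      / ∏ i, ∏ j, ((w j) ^ 2 - (α i) ^ 2)) = fun α => ∏ i, g (α i) := by
    funext α
    rw [Finset.prod_div_distrib, Finset.prod_mul_distrib, ← Complex.exp_sum, Finset.mul_sum]
  have hzpow (j : Fin k) : (w j) ^ (-(2 * (k : ℤ))) = (((w j) ^ 2)⁻¹) ^ k := by
    rw [zpow_neg, zpow_mul, zpow_natCast, inv_pow]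
    norm_cast
  have hg : iteratedDeriv 3 g 0 = 3 * (∏ j, ((w j) ^ 2)⁻¹) * (N ^ 2 + 2 * ∑ j, ((w j) ^ 2)⁻¹) :=
    iteratedDeriv_three_mul_cexp_div_prod_sub_sq_zero _ (fun j => pow_ne_zero 2 (hw j)) N
  rw [hseparate, allThirdPartials_prod (fun _ => g)]
  simp only [Finset.prod_const, Finset.card_univ, Fintype.card_fin, hg, hzpow, Finset.prod_pow,
    mul_pow, zpow_neg, zpow_ofNat]
end

section
/- Single-variable version of Lemma 4 (m = 2 case, one variable): for w₁,...,w_k nonzero and N ∈ ℂ, the second derivative of α ↦ e^{−Nα}/∏_{j=1}^k(w_j² − α²) evaluated at α = 0 equals (∏_j w_j^{−2})·(N² + 2Σ_j w_j^{−2}). -/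
/-!
Write the function as `e^{-Nα} · G(α²)` with `G t = ∏ⱼ (wⱼ² - t)⁻¹`. By Leibniz's rule its
second derivative at `0` is `N² G 0 - 2N (G ∘ sq)'(0) + (G ∘ sq)''(0)`, and the chain rule gives
`(G ∘ sq)'(0) = 0`, `(G ∘ sq)''(0) = 2 G'(0)`. Finally `G'(0) = G(0) · Σⱼ wⱼ⁻²`, read off from the
logarithmic derivative of the product.
-/

open Finset

section
variable {𝕜 : Type*} [NontriviallyNormedField 𝕜]

theorem deriv_comp_sq_zero {G : 𝕜 → 𝕜} (hG : DifferentiableAt 𝕜 G 0) :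
    deriv (fun x => G (x ^ 2)) 0 = 0 := by
  have h := deriv_comp (x := (0 : 𝕜)) (h := fun x : 𝕜 => x ^ 2) (by simpa using hG)
    (differentiableAt_pow 2)
  simpa [Function.comp_def] using h

theorem iteratedDeriv_two_comp_sq_zero {G : 𝕜 → 𝕜} (hG : ContDiffAt 𝕜 2 G 0) :
    iteratedDeriv 2 (fun x => G (x ^ 2)) 0 = 2 * deriv G 0 := by
  have h := iteratedDeriv_comp_two (f := fun x : 𝕜 => x ^ 2) (x := 0) (by simpa using hG)
    (contDiffAt_id.pow 2)
  simpa [Function.comp_def, mul_comm] using h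

theorem logDeriv_inv_const_sub {a t : 𝕜} (h : a ≠ t) :
    logDeriv (fun t => (a - t)⁻¹) t = (a - t)⁻¹ := by
  have h' := logDeriv_comp (f := (·⁻¹)) (g := fun t : 𝕜 => a - t) (x := t)
    (differentiableAt_inv (sub_ne_zero.2 h)) ((differentiableAt_const a).sub differentiableAt_id)
  simpa [Function.comp_def, deriv_const_sub, neg_div] using h'

theorem deriv_prod_inv_const_sub {ι : Type*} (s : Finset ι) (a : ι → 𝕜) {t : 𝕜}
    (h : ∀ j ∈ s, a j ≠ t) :
    deriv (fun t => ∏ j ∈ s, (a j - t)⁻¹) t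
      = (∏ j ∈ s, (a j - t)⁻¹) * ∑ j ∈ s, (a j - t)⁻¹ := by
  have hne : ∀ j ∈ s, (a j - t)⁻¹ ≠ 0 := fun j hj => inv_ne_zero (sub_ne_zero.2 (h j hj))
  have hlog := logDeriv_prod (f := fun j t => (a j - t)⁻¹) hne
    (fun j hj => ((differentiableAt_const _).sub differentiableAt_id).inv (sub_ne_zero.2 (h j hj)))
  rw [logDeriv_apply, div_eq_iff (prod_ne_zero_iff.2 hne)] at hlog
  rw [hlog, mul_comm]
  exact congrArg _ (sum_congr rfl fun j hj => logDeriv_inv_const_sub (h j hj))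

end

/-- For `w₁, …, w_k` nonzero and `N ∈ ℂ`, the second derivative of
`α ↦ e^{−Nα} / ∏_j (w_j² − α²)` at `α = 0` equals
`(∏_j w_j^{−2}) (N² + 2 Σ_j w_j^{−2})`. -/
theorem second_deriv_single_variable (k : ℕ) (w : Fin k → ℂ) (hw : ∀ j, w j ≠ 0) (N : ℂ) :
    iteratedDeriv 2 (fun α : ℂ => Complex.exp (-N * α) / ∏ j, ((w j) ^ 2 - α ^ 2)) 0
      = (∏ j, (w j) ^ (-2 : ℤ)) * (N ^ 2 + 2 * ∑ j, (w j) ^ (-2 : ℤ)) := by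
  set G : ℂ → ℂ := fun t => ∏ j, ((w j) ^ 2 - t)⁻¹
  have hw2 : ∀ j ∈ (univ : Finset (Fin k)), (w j) ^ 2 ≠ 0 := fun j _ => pow_ne_zero 2 (hw j)
  have hG : ContDiffAt ℂ 2 G 0 :=
    contDiffAt_prod fun j hj => (contDiffAt_const.sub contDiffAt_id).inv (by simpa using hw2 j hj)
  have hG0 : G 0 = ∏ j, (w j) ^ (-2 : ℤ) := by simp [G, zpow_neg]
  have hG'0 : deriv G 0 = (∏ j, (w j) ^ (-2 : ℤ)) * ∑ j, (w j) ^ (-2 : ℤ) := by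
    simp only [G]
    rw [deriv_prod_inv_const_sub univ _ hw2]
    simp [zpow_neg]
  have hsplit : (fun α : ℂ => Complex.exp (-N * α) / ∏ j, ((w j) ^ 2 - α ^ 2))
      = (fun α => Complex.exp (-N * α)) * fun α => G (α ^ 2) := by
    funext α
    simp [G, div_eq_mul_inv, prod_inv_distrib]
  have hexp : ContDiffAt ℂ 2 (fun α : ℂ => Complex.exp (-N * α)) 0 := by fun_prop
  have hGsq : ContDiffAt ℂ 2 (fun α : ℂ => G (α ^ 2)) 0 :=
    ContDiffAt.comp (g := G) 0 (by simpa using hG) (contDiffAt_id.pow 2)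
  rw [hsplit, iteratedDeriv_mul hexp hGsq]
  simp only [iteratedDeriv_cexp_const_mul]
  norm_num [sum_range_succ, iteratedDeriv_two_comp_sq_zero hG,
    deriv_comp_sq_zero (hG.differentiableAt two_ne_zero), hG0, hG'0]
  ring
end

section
/- Value of the second symplectic constant: with T_{2,0}(u) = g₁(u)g₂(u) − g₀(u)g₃(u) where g_m(u) = Σ_{j≥0} u^j/(j!(m+2j)!), the constant b₂ := 2^{−7} · (d/du)² [ e^u T_{2,0}(2u) ]|_{u=0} equals 19/(2⁴·3²·5·7) = 19/5040. -/
open scoped Nat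

/-- `g_m(u) = Σ_{j ≥ 0, m+2j ≥ 0} u^j / (j! (m+2j)!)`. -/
noncomputable def gFun (m : ℤ) (u : ℂ) : ℂ :=
  ∑' j : ℕ, if 0 ≤ m + 2 * (j : ℤ) then
    u ^ j / ((j ! : ℂ) * ((m + 2 * (j : ℤ)).toNat ! : ℂ)) else 0

/-- `T_{2,0}(u) = det [[g₁(u), g₀(u)], [g₃(u), g₂(u)]] = g₁(u)g₂(u) − g₀(u)g₃(u)`. -/
noncomputable def tauTwoZero (u : ℂ) : ℂ :=
  Matrix.det (!![gFun 1 u, gFun 0 u; gFun 3 u, gFun 2 u])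

/-!
Termwise differentiation gives `g_m' = g_{m+2}` and `g_m(0) = 1/m!`. Hence
`T_{2,0}' = g₁g₄ − g₀g₅` (the terms `g₃g₂` cancel) and
`T_{2,0}'' = g₃g₄ + g₁g₆ − g₂g₅ − g₀g₇`, and by the Leibniz rule
`(e^u T_{2,0}(2u))''(0) = T_{2,0}(0) + 4T_{2,0}'(0) + 4T_{2,0}''(0) = 1/3 + 2/15 + 1/63 = 152/315`.
-/

lemma iteratedDeriv_two_exp_mul_comp_const_mul {f : ℂ → ℂ} (hf : Differentiable ℂ f)
    (hf' : DifferentiableAt ℂ (deriv f) 0) (c : ℂ) :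
    iteratedDeriv 2 (fun u => Complex.exp u * f (c * u)) 0
      = f 0 + 2 * c * deriv f 0 + c ^ 2 * deriv (deriv f) 0 := by
  have hcomp {g : ℂ → ℂ} {g' : ℂ} {u : ℂ} (hg : HasDerivAt g g' (c * u)) :
      HasDerivAt (fun u => g (c * u)) (c * g') u := by
    simpa [Function.comp_def] using hg.scomp u ((hasDerivAt_id u).const_mul c)
  have hfirst (u : ℂ) : HasDerivAt (fun u => Complex.exp u * f (c * u))
      (Complex.exp u * f (c * u) + Complex.exp u * (c * deriv f (c * u))) u :=
    (Complex.hasDerivAt_exp u).fun_mul (hcomp (hf _).hasDerivAt)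
  have hf'' : HasDerivAt (deriv f) (deriv (deriv f) 0) (c * 0) := by
    simpa using hf'.hasDerivAt
  have hsecond :=
    (hfirst 0).fun_add ((Complex.hasDerivAt_exp 0).fun_mul ((hcomp hf'').const_mul c))
  rw [iteratedDeriv_succ, iteratedDeriv_one, funext fun u => (hfirst u).deriv, hsecond.deriv]
  simp only [mul_zero, Complex.exp_zero]
  ring

noncomputable def gTerm (m j : ℕ) (u : ℂ) : ℂ :=
  u ^ j / ((j ! : ℂ) * ((m + 2 * j)! : ℂ))

noncomputable def gNat (m : ℕ) (u : ℂ) : ℂ :=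
  ∑' j, gTerm m j u

lemma gFun_natCast (m : ℕ) (u : ℂ) : gFun m u = gNat m u := by
  refine tsum_congr fun j => ?_
  rw [if_pos (by positivity), gTerm, show ((m : ℤ) + 2 * j).toNat = m + 2 * j by omega]

lemma norm_gTerm_le (m j : ℕ) (u : ℂ) : ‖gTerm m j u‖ ≤ ‖u‖ ^ j / j ! := by
  rw [gTerm, norm_div, norm_pow, norm_mul, Complex.norm_natCast, Complex.norm_natCast]
  gcongr
  exact le_mul_of_one_le_right (by positivity) (mod_cast Nat.factorial_pos _)

lemma summable_gTerm (m : ℕ) (u : ℂ) : Summable (gTerm m · u) :=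
  .of_norm_bounded (Real.summable_pow_div_factorial ‖u‖) (norm_gTerm_le m · u)

lemma hasDerivAt_gTerm_succ (m j : ℕ) (u : ℂ) :
    HasDerivAt (gTerm m (j + 1)) (gTerm (m + 2) j u) u := by
  refine ((hasDerivAt_pow (j + 1) u).div_const _).congr_deriv ?_
  rw [gTerm, show m + 2 * (j + 1) = m + 2 + 2 * j by ring, Nat.factorial_succ]
  push_cast
  field_simp

lemma gNat_zero (m : ℕ) : gNat m 0 = (m ! : ℂ)⁻¹ := by
  rw [gNat, tsum_eq_single 0 fun j hj => by simp [gTerm, zero_pow hj]]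
  simp [gTerm]

lemma hasDerivAt_gNat (m : ℕ) (u : ℂ) : HasDerivAt (gNat m) (gNat (m + 2) u) u := by
  have hsplit : gNat m = fun y => (m ! : ℂ)⁻¹ + ∑' j, gTerm m (j + 1) y := by
    funext y
    rw [gNat, (summable_gTerm m y).tsum_eq_zero_add]
    simp [gTerm]
  have hu : u ∈ Metric.ball (0 : ℂ) (‖u‖ + 1) := by simp
  rw [hsplit]
  refine .const_add _ <| hasDerivAt_tsum_of_isPreconnected
    (Real.summable_pow_div_factorial (‖u‖ + 1)) Metric.isOpen_ball
    (convex_ball _ _).isPreconnected (fun j y _ => hasDerivAt_gTerm_succ m j y)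
    (fun j y hy => (norm_gTerm_le _ j y).trans ?_) hu
    ((summable_nat_add_iff 1).mpr (summable_gTerm m u)) hu
  gcongr
  exact (mem_ball_zero_iff.mp hy).le

lemma hasDerivAt_gNat_mul (a b : ℕ) (u : ℂ) :
    HasDerivAt (fun u => gNat a u * gNat b u)
      (gNat (a + 2) u * gNat b u + gNat a u * gNat (b + 2) u) u :=
  (hasDerivAt_gNat a u).fun_mul (hasDerivAt_gNat b u)

lemma tauTwoZero_eq : tauTwoZero = fun u => gNat 1 u * gNat 2 u - gNat 0 u * gNat 3 u := by
  funext u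
  simp [tauTwoZero, Matrix.det_fin_two_of, ← gFun_natCast]

lemma hasDerivAt_tauTwoZero (u : ℂ) :
    HasDerivAt tauTwoZero (gNat 1 u * gNat 4 u - gNat 0 u * gNat 5 u) u := by
  rw [tauTwoZero_eq]
  refine ((hasDerivAt_gNat_mul 1 2 u).fun_sub (hasDerivAt_gNat_mul 0 3 u)).congr_deriv ?_
  ring

lemma hasDerivAt_deriv_tauTwoZero (u : ℂ) :
    HasDerivAt (deriv tauTwoZero)
      (gNat 3 u * gNat 4 u + gNat 1 u * gNat 6 u - (gNat 2 u * gNat 5 u + gNat 0 u * gNat 7 u))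
      u := by
  rw [funext fun u => (hasDerivAt_tauTwoZero u).deriv]
  exact (hasDerivAt_gNat_mul 1 4 u).fun_sub (hasDerivAt_gNat_mul 0 5 u)

/-- The second symplectic constant:
`b₂ = 2^{−7} · (d/du)² [e^u T_{2,0}(2u)]|_{u=0} = 19/5040`. -/
theorem b_two_USp :
    ((2 : ℂ) ^ 7)⁻¹ * iteratedDeriv 2 (fun u : ℂ => Complex.exp u * tauTwoZero (2 * u)) 0
      = 19 / 5040 := by
  rw [iteratedDeriv_two_exp_mul_comp_const_mul
      (fun u => (hasDerivAt_tauTwoZero u).differentiableAt)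
      (hasDerivAt_deriv_tauTwoZero 0).differentiableAt, (hasDerivAt_deriv_tauTwoZero 0).deriv,
    (hasDerivAt_tauTwoZero 0).deriv, tauTwoZero_eq]
  simp only [gNat_zero]
  norm_num [Nat.factorial]
end
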